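/- Let Φ be a transversally symplectic formal diffeomorphism of ℂ[[x,y₁,y₂]], let X be a transversally Hamiltonian singular formal vector field, and let Z be a singular formal vector field such that Φ conjugates X to Z, i.e. Φ*(Z(f)) = X(Φ*(f)) for all f. Then Z is transversally Hamiltonian. -/

import Mathlib

/-!
Pulling back by `Φ` is the substitution `f ↦ f ∘ Φ`, whose partial derivatives obey the chain
rule (checked on polynomials, then on truncations). Substitution along a formal diffeomorphism
is injective: its kernel has no constant terms and, the Jacobian being invertible, is stable
under all partial derivatives, so it is zero.

Evaluating the conjugacy on the coordinates gives `Φ*(Z_j) = X(φ_j)`. Since `φ₀ = x` and `X₀`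
depends on `x` alone, `Φ*` fixes `X₀`, whence `Z₀ = X₀`. Writing `{F, G}` for the Poisson
bracket in `y₁, y₂`, the symplectic condition `{φ₁, φ₂} = 1` inverts the chain rule to
`Φ*(∂_{y₁} f) = {Φ*f, φ₂}` and `Φ*(∂_{y₂} f) = {φ₁, Φ*f}`. As `∂_y X₀ = 0`,
`Φ*(div_y Z) = {Xφ₁, φ₂} + {φ₁, Xφ₂} = X{φ₁, φ₂} + (div_y X){φ₁, φ₂} = div_y X`, and
`x · div_y Z = Z₀` follows by injectivity of `Φ*`.
-/

open MvPowerSeries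

noncomputable section

/-- `R3` is the ring `ℂ[[x, y₁, y₂]]` of formal power series in three variables, where
variable `0` plays the role of `x`, variable `1` of `y₁` and variable `2` of `y₂`. -/
abbrev R3 : Type := MvPowerSeries (Fin 3) ℂ

/-- Build a formal power series from its coefficient function. -/
def mk3 (g : (Fin 3 →₀ ℕ) → ℂ) : R3 := g

/-- Coefficient of the monomial with exponents `m` in `f`. -/
def cf (m : Fin 3 →₀ ℕ) (f : R3) : ℂ := MvPowerSeries.coeff m f

/-- The exponent vector of the monomial `x^{k₀} y₁^{k₁} y₂^{k₂}`. -/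
def e (k₀ k₁ k₂ : ℕ) : Fin 3 →₀ ℕ :=
  Finsupp.single 0 k₀ + Finsupp.single 1 k₁ + Finsupp.single 2 k₂

/-- Formal partial derivative with respect to the `i`-th variable. -/
def pd (i : Fin 3) (f : R3) : R3 :=
  mk3 fun m => ((m i : ℂ) + 1) * cf (m + Finsupp.single i 1) f

/-- The formal vector field (derivation) `b 0 · ∂/∂x + b 1 · ∂/∂y₁ + b 2 · ∂/∂y₂`. -/
def VF (b : Fin 3 → R3) (f : R3) : R3 := ∑ i : Fin 3, b i * pd i f

/-- The maximal ideal `𝔪` of `ℂ[[x,y₁,y₂]]` (series with zero constant term). -/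
def mI : Ideal R3 := RingHom.ker (MvPowerSeries.constantCoeff (σ := Fin 3) (R := ℂ))

/-- The variables, as power series. -/
def Xv (i : Fin 3) : R3 := MvPowerSeries.X i

/-- Constant power series. -/
def Cc (a : ℂ) : R3 := MvPowerSeries.C (σ := Fin 3) (R := ℂ) a

/-- The matrix of linear coefficients of a triple of power series. -/
def linM (φ : Fin 3 → R3) : Matrix (Fin 3) (Fin 3) ℂ :=
  Matrix.of fun i j => cf (Finsupp.single j 1) (φ i)

/-- `φ` is a formal diffeomorphism: a triple in `𝔪³` with invertible linear part. -/
def IsDiffeo (φ : Fin 3 → R3) : Prop :=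
  (∀ i, (MvPowerSeries.constantCoeff (σ := Fin 3) (R := ℂ)) (φ i) = 0) ∧ IsUnit (linM φ).det

/-- `φ` is fibered: its first component is the variable `x`. -/
def IsFibered (φ : Fin 3 → R3) : Prop := φ 0 = Xv 0

/-- Pullback (substitution) action: `pb φ f = f(φ 0, φ 1, φ 2)`, written coefficientwise
(the sum below has only finitely many nonzero terms when each `φ i` has zero constant
term, which is the case for formal diffeomorphisms). -/
def pb (φ : Fin 3 → R3) (f : R3) : R3 :=
  mk3 fun k => ∑' m : Fin 3 →₀ ℕ, cf m f * cf k (∏ i : Fin 3, φ i ^ (m i))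

/-- `Φ` conjugates `Y` to `Z` (that is, `Z = Φ_*(Y)`): `Φ*(Z(f)) = Y(Φ*(f))` for all `f`. -/
def Conj (φ Y Z : Fin 3 → R3) : Prop :=
  ∀ f : R3, pb φ (VF Z f) = VF Y (pb φ f)

/-- The power series `c(y₁ y₂)` obtained from a one-variable series `c` by substituting
`v = y₁ y₂`. -/
def csub (c : PowerSeries ℂ) : R3 :=
  mk3 fun m => if m 0 = 0 ∧ m 1 = m 2 then PowerSeries.coeff (m 1) c else 0

/-- Components of the normal form
`x²∂/∂x + (−λ + a₁x + c₁(y₁y₂))y₁∂/∂y₁ + (λ + a₂x + c₂(y₁y₂))y₂∂/∂y₂`. -/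
def NF (l a₁ a₂ : ℂ) (c₁ c₂ : PowerSeries ℂ) : Fin 3 → R3 :=
  ![Xv 0 ^ 2,
    (Cc (-l) + Cc a₁ * Xv 0 + csub c₁) * Xv 1,
    (Cc l + Cc a₂ * Xv 0 + csub c₂) * Xv 2]

/-- Components of a doubly-resonant saddle-node in prepared form
`x²∂/∂x + (−λy₁ + F₁)∂/∂y₁ + (λy₂ + F₂)∂/∂y₂`. -/
def SN (l : ℂ) (F₁ F₂ : R3) : Fin 3 → R3 :=
  ![Xv 0 ^ 2, Cc (-l) * Xv 1 + F₁, Cc l * Xv 2 + F₂]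

/-- The residue of the prepared saddle-node with nonlinear parts `F₁, F₂`: the coefficient
of `x y₁` in `F₁` plus the coefficient of `x y₂` in `F₂`. -/
def resid (F₁ F₂ : R3) : ℂ := cf (e 1 1 0) F₁ + cf (e 1 0 1) F₂

/-- `z` is not a nonpositive rational number. -/
def NotQle0 (z : ℂ) : Prop := ∀ q : ℚ, q ≤ 0 → z ≠ (q : ℂ)

/-- `φ` is transversally symplectic (with respect to `ω = dy₁∧dy₂/x` and `dx`):
it is fibered and `(∂φ₁/∂y₁)(∂φ₂/∂y₂) − (∂φ₁/∂y₂)(∂φ₂/∂y₁) = 1`. -/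
def TransSymp (φ : Fin 3 → R3) : Prop :=
  φ 0 = Xv 0 ∧ pd 1 (φ 1) * pd 2 (φ 2) - pd 2 (φ 1) * pd 1 (φ 2) = 1

/-- `b` depends only on the variable `x`. -/
def OnlyX (b : R3) : Prop := ∀ m : Fin 3 →₀ ℕ, (m 1 ≠ 0 ∨ m 2 ≠ 0) → cf m b = 0

/-- The vector field with components `b` is transversally Hamiltonian (w.r.t.
`ω = dy₁∧dy₂/x` and `dx`): `b 0 ∈ x·ℂ[[x]]` and `x·(∂b₁/∂y₁ + ∂b₂/∂y₂) = b 0`. -/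
def TransHam (b : Fin 3 → R3) : Prop :=
  OnlyX (b 0) ∧ (MvPowerSeries.constantCoeff (σ := Fin 3) (R := ℂ)) (b 0) = 0 ∧
    Xv 0 * (pd 1 (b 1) + pd 2 (b 2)) = b 0

namespace MvPowerSeries

open Finsupp

variable {σ τ R : Type*}

theorem pderiv_comm [CommSemiring R] (i j : σ) (f : MvPowerSeries σ R) :
    pderiv R i (pderiv R j f) = pderiv R j (pderiv R i f) := by
  classical
  ext d
  simp only [coeff_pderiv, add_right_comm d (single i 1)]
  rcases eq_or_ne i j with rfl | hij
  · rfl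
  · simp [hij, hij.symm]
    ring

theorem eq_zero_of_pderiv_closed [CommRing R] [IsAddTorsionFree R]
    (P : MvPowerSeries σ R → Prop) (hconst : ∀ f, P f → constantCoeff f = 0)
    (hpderiv : ∀ f i, P f → P (pderiv R i f)) {f : MvPowerSeries σ R} (hf : P f) : f = 0 := by
  ext d
  induction hd : d.degree generalizing d f with
  | zero =>
    rw [(degree_eq_zero_iff d).mp hd, coeff_zero_eq_constantCoeff, hconst f hf, map_zero]
  | succ n ih =>
    obtain ⟨i, hi : d i ≠ 0⟩ := ne_iff.mp (fun h : d = 0 => by simp [h] at hd)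
    have hle : single i 1 ≤ d := fun j ↦ by
      by_cases hj : j = i <;> grind [single_eq_same, single_eq_of_ne]
    have hdeg : (d - single i 1).degree = n := by
      have := congrArg degree (tsub_add_cancel_of_le hle)
      rw [map_add, degree_single, hd] at this
      omega
    have hcoeff := ih (hpderiv f i hf) (d - single i 1) hdeg
    rwa [coeff_pderiv, tsub_add_cancel_of_le hle, coe_tsub, Pi.sub_apply,
      single_eq_same, Nat.cast_sub (Nat.one_le_iff_ne_zero.mpr hi), Nat.cast_one, sub_add_cancel,
      mul_comm, ← nsmul_eq_mul, map_zero, smul_eq_zero_iff_right hi] at hcoeff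

section Subst

variable [CommRing R] [Finite σ] {a : σ → MvPowerSeries τ R}

theorem constantCoeff_subst_eq (ha : ∀ i, constantCoeff (a i) = 0) (f : MvPowerSeries σ R) :
    constantCoeff (subst a f) = constantCoeff f := by
  have hsplit : f = C (constantCoeff f) + (f - C (constantCoeff f)) := by ring
  rw [hsplit, subst_add (hasSubst_of_constantCoeff_zero ha), map_add, subst_C,
    constantCoeff_subst_eq_zero (hasSubst_of_constantCoeff_zero ha) ha (by simp)]
  simp

theorem order_le_order_subst (ha : ∀ i, constantCoeff (a i) = 0) (f : MvPowerSeries σ R) :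
    f.order ≤ (subst a f).order :=
  calc f.order ≤ (⨅ i, (a i).order) * f.order :=
        le_mul_of_one_le_left zero_le
          (le_iInf fun i => one_le_order_iff_constCoeff_eq_zero.mpr (ha i))
    _ ≤ (subst a f).order := le_order_subst (hasSubst_of_constantCoeff_zero ha) f

end Subst

theorem le_order_pderiv [CommSemiring R] {n : ℕ} {f : MvPowerSeries σ R}
    (hf : (n + 1 : ℕ) ≤ f.order) (i : σ) : n ≤ (pderiv R i f).order := by
  refine nat_le_order fun d hd => ?_
  rw [coeff_pderiv, coeff_of_lt_order (hf.trans_lt' ?_), zero_mul]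
  rw [map_add, degree_single]
  exact_mod_cast Nat.add_lt_add_right hd 1

theorem pderiv_aeval [CommSemiring R] [Fintype σ] (a : σ → MvPowerSeries τ R) (i : τ)
    (p : MvPolynomial σ R) :
    pderiv R i (MvPolynomial.aeval a p) =
      ∑ j, MvPolynomial.aeval a (MvPolynomial.pderiv j p) * pderiv R i (a j) := by
  classical
  induction p using MvPolynomial.induction_on with
  | C r => simp [algebraMap_apply]
  | add p q hp hq => simp [hp, hq, add_mul, Finset.sum_add_distrib]
  | mul_X p j hp =>
    simp [Derivation.leibniz, MvPolynomial.pderiv_X, hp, Pi.single_apply, add_mul,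
      Finset.sum_add_distrib, Finset.mul_sum, apply_ite (MvPolynomial.aeval a), ite_mul,
      mul_assoc]

theorem pderiv_subst [CommRing R] [Fintype σ] {a : σ → MvPowerSeries τ R}
    (ha : ∀ j, constantCoeff (a j) = 0) (i : τ) (f : MvPowerSeries σ R) :
    pderiv R i (subst a f) = ∑ j, subst a (pderiv R j f) * pderiv R i (a j) := by
  have hs := hasSubst_of_constantCoeff_zero ha
  ext d
  -- Coefficient `d` of either side only sees the coefficients of `f` of degree `≤ d.degree + 1`,
  -- so `f` may be replaced by a polynomial truncation.
  set p : MvPowerSeries σ R := ↑(truncTotal (d.degree + 2) f)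
  have hg : ((d.degree + 2 : ℕ) : ℕ∞) ≤ (f - p).order := nat_le_order fun m hm => by
    rw [map_sub, MvPolynomial.coeff_coe, coeff_truncTotal _ hm, sub_self]
  have hpoly : pderiv R i (subst a p) = ∑ j, subst a (pderiv R j p) * pderiv R i (a j) := by
    simp only [p, subst_coe, pderiv_coe, pderiv_aeval]
  have hlhs : coeff d (pderiv R i (subst a (f - p))) = 0 := by
    rw [coeff_pderiv, coeff_of_lt_order, zero_mul]
    refine lt_of_lt_of_le ?_ (hg.trans (order_le_order_subst ha _))
    rw [map_add, degree_single]
    exact_mod_cast Nat.lt_succ_self _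
  have hrhs : coeff d (∑ j, subst a (pderiv R j (f - p)) * pderiv R i (a j)) = 0 := by
    rw [map_sum]
    refine Finset.sum_eq_zero fun j _ => coeff_of_lt_order ?_
    calc (d.degree : ℕ∞) < (d.degree + 1 : ℕ) := by exact_mod_cast Nat.lt_succ_self _
      _ ≤ (pderiv R j (f - p)).order := le_order_pderiv hg j
      _ ≤ (subst a (pderiv R j (f - p))).order := order_le_order_subst ha _
      _ ≤ _ := le_self_add.trans le_order_mul
  have hsplit : f = p + (f - p) := (add_sub_cancel p f).symm
  rw [hsplit]
  simp only [map_add, subst_add hs, add_mul, Finset.sum_add_distrib, hpoly, hlhs, hrhs]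

section Injective

variable [CommRing R] [IsAddTorsionFree R] [Fintype σ] {a : σ → MvPowerSeries σ R}

theorem subst_injective [DecidableEq σ] (ha : ∀ i, constantCoeff (a i) = 0)
    (hlin : IsUnit (Matrix.of fun i j => coeff (single j 1) (a i)).det) :
    Function.Injective (subst (R := R) a) := by
  set J : Matrix σ σ (MvPowerSeries σ R) := Matrix.of fun i j => pderiv R i (a j)
  have hJ : IsUnit J := by
    have hlinJ : constantCoeff.mapMatrix J =
        (Matrix.of fun i j => coeff (single j 1) (a i)).transpose := by
      ext i j
      simp [J, ← coeff_zero_eq_constantCoeff_apply, coeff_pderiv]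
    rw [Matrix.isUnit_iff_isUnit_det, isUnit_iff_constantCoeff, RingHom.map_det, hlinJ,
      Matrix.det_transpose]
    exact hlin
  -- By the chain rule, `J` maps `(subst a (pderiv R j g))ⱼ` to `(pderiv R i (subst a g))ᵢ`.
  have hker : ∀ g, subst a g = 0 → g = 0 := fun g hg => by
    refine eq_zero_of_pderiv_closed (fun g => subst a g = 0)
      (fun g hg => by rw [← constantCoeff_subst_eq ha, hg, map_zero]) (fun g i hg => ?_) hg
    have hJv : J.mulVec (fun j => subst a (pderiv R j g)) = 0 := funext fun k => by
      simp only [J, Matrix.mulVec, dotProduct, Matrix.of_apply, mul_comm (pderiv R k _),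
        ← pderiv_subst ha, hg, map_zero, Pi.zero_apply]
    exact congrFun (Matrix.mulVec_injective_of_isUnit hJ (hJv.trans (J.mulVec_zero).symm)) i
  intro f g hfg
  refine sub_eq_zero.mp (hker _ ?_)
  rw [subst_sub (hasSubst_of_constantCoeff_zero ha), hfg, sub_self]

theorem subst_eq_self_of_pderiv_eq_zero (ha : ∀ i, constantCoeff (a i) = 0) {k : σ}
    (hk : a k = X k) {f : MvPowerSeries σ R} (hf : ∀ j ≠ k, pderiv R j f = 0) :
    subst a f = f := by
  classical
  have hzero : subst a (0 : MvPowerSeries σ R) = 0 := by simpa using subst_C (a := a) (0 : R)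
  refine sub_eq_zero.mp (eq_zero_of_pderiv_closed
    (fun h => ∃ f, (∀ j ≠ k, pderiv R j f = 0) ∧ h = subst a f - f) ?_ ?_ ⟨f, hf, rfl⟩)
  · rintro _ ⟨f, -, rfl⟩
    rw [map_sub, constantCoeff_subst_eq ha, sub_self]
  · rintro _ i ⟨f, hf, rfl⟩
    refine ⟨pderiv R i f, fun j hj => by rw [pderiv_comm, hf j hj, map_zero], ?_⟩
    rw [map_sub, pderiv_subst ha,
      Finset.sum_eq_single k (fun j _ hj => by simp [hf j hj, hzero]) (by simp), hk]
    by_cases hi : i = k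
    · subst hi
      simp
    · simp [hf i hi, pderiv_X_of_ne (Ne.symm hi), hzero]

end Injective

end MvPowerSeries

section Transverse

variable {R : Type*} [CommRing R]

/-- The Poisson bracket in the transverse variables `y₁ = X 1` and `y₂ = X 2`. -/
def poissonBracket (F G : MvPowerSeries (Fin 3) R) : MvPowerSeries (Fin 3) R :=
  pderiv R 1 F * pderiv R 2 G - pderiv R 2 F * pderiv R 1 G

theorem poissonBracket_leibniz (Y : Fin 3 → MvPowerSeries (Fin 3) R)
    (hY₁ : pderiv R 1 (Y 0) = 0) (hY₂ : pderiv R 2 (Y 0) = 0) (A B : MvPowerSeries (Fin 3) R) :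
    poissonBracket (∑ i, Y i * pderiv R i A) B + poissonBracket A (∑ i, Y i * pderiv R i B) =
      ∑ i, Y i * pderiv R i (poissonBracket A B) +
        (pderiv R 1 (Y 1) + pderiv R 2 (Y 2)) * poissonBracket A B := by
  simp only [poissonBracket, Fin.sum_univ_three, map_add, map_sub, Derivation.leibniz,
    smul_eq_mul, hY₁, hY₂, pderiv_comm (R := R) (1 : Fin 3) 0,
    pderiv_comm (R := R) (2 : Fin 3) 0, pderiv_comm (R := R) (2 : Fin 3) 1]
  ring

variable {φ : Fin 3 → MvPowerSeries (Fin 3) R} (h0 : ∀ i, constantCoeff (φ i) = 0)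
  (hx : φ 0 = X 0) (hφ : poissonBracket (φ 1) (φ 2) = 1)
include h0 hx hφ

theorem subst_pderiv_one (f : MvPowerSeries (Fin 3) R) :
    subst φ (pderiv R 1 f) = poissonBracket (subst φ f) (φ 2) := by
  have h₁ := pderiv_subst h0 1 f
  have h₂ := pderiv_subst h0 2 f
  simp only [Fin.sum_univ_three, hx, pderiv_X_of_ne (by decide : (0 : Fin 3) ≠ 1),
    pderiv_X_of_ne (by decide : (0 : Fin 3) ≠ 2), mul_zero, zero_add] at h₁ h₂
  unfold poissonBracket at hφ ⊢
  linear_combination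
    -pderiv R 2 (φ 2) * h₁ + pderiv R 1 (φ 2) * h₂ - subst φ (pderiv R 1 f) * hφ

theorem subst_pderiv_two (f : MvPowerSeries (Fin 3) R) :
    subst φ (pderiv R 2 f) = poissonBracket (φ 1) (subst φ f) := by
  have h₁ := pderiv_subst h0 1 f
  have h₂ := pderiv_subst h0 2 f
  simp only [Fin.sum_univ_three, hx, pderiv_X_of_ne (by decide : (0 : Fin 3) ≠ 1),
    pderiv_X_of_ne (by decide : (0 : Fin 3) ≠ 2), mul_zero, zero_add] at h₁ h₂
  unfold poissonBracket at hφ ⊢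
  linear_combination
    pderiv R 2 (φ 1) * h₁ - pderiv R 1 (φ 1) * h₂ - subst φ (pderiv R 2 f) * hφ

end Transverse

theorem pd_eq_pderiv (i : Fin 3) : pd i = pderiv ℂ i := by
  ext f m
  rw [coeff_pderiv, mul_comm]
  rfl

theorem pb_eq_subst {φ : Fin 3 → R3} (h0 : ∀ i, constantCoeff (φ i) = 0) (f : R3) :
    pb φ f = subst φ f := by
  have hs := hasSubst_of_constantCoeff_zero h0
  ext k
  rw [coeff_subst hs,
    ← tsum_eq_finsum (L := SummationFilter.unconditional _) (coeff_subst_finite hs f k)]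
  simp only [Finsupp.prod_fintype _ _ (fun i => pow_zero (φ i)), smul_eq_mul]
  rfl

theorem VF_eq_sum_pderiv (b : Fin 3 → R3) (f : R3) : VF b f = ∑ i, b i * pderiv ℂ i f := by
  simp only [VF, pd_eq_pderiv]

theorem VF_Xv (b : Fin 3 → R3) (j : Fin 3) : VF b (Xv j) = b j := by
  simp [VF_eq_sum_pderiv, Xv, pderiv_X, Pi.single_apply]

theorem pderiv_eq_zero_of_onlyX {b : R3} (hb : OnlyX b) {j : Fin 3} (hj : j ≠ 0) :
    pderiv ℂ j b = 0 := by
  ext m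
  rw [coeff_pderiv, map_zero, show coeff (m + Finsupp.single j 1) b = 0 from
    hb _ (by fin_cases j <;> simp_all), zero_mul]

theorem pushforward_trans_hamiltonian_general
    (φ Xc Zc : Fin 3 → R3) (hd : IsDiffeo φ) (hs : TransSymp φ)
    (hZsing : ∀ i, Zc i ∈ mI)
    (hXham : TransHam Xc) (hconj : Conj φ Xc Zc) :
    TransHam Zc := by
  obtain ⟨h0, hlin⟩ := hd
  obtain ⟨hx, hsymp⟩ := hs
  obtain ⟨hXonly, -, hXdiv⟩ := hXham
  have hsub := hasSubst_of_constantCoeff_zero h0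
  have hφ : poissonBracket (φ 1) (φ 2) = 1 := by
    simpa only [poissonBracket, pd_eq_pderiv] using hsymp
  have hinj := subst_injective h0 hlin
  have hZ (j : Fin 3) : subst φ (Zc j) = VF Xc (φ j) := by
    have := hconj (Xv j)
    rwa [VF_Xv, pb_eq_subst h0, pb_eq_subst h0, Xv, subst_X hsub] at this
  have hXfix : subst φ (Xc 0) = Xc 0 :=
    subst_eq_self_of_pderiv_eq_zero h0 hx fun _ hj => pderiv_eq_zero_of_onlyX hXonly hj
  have hZ0 : Zc 0 = Xc 0 := hinj (by rw [hZ 0, hx, VF_Xv, hXfix])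
  refine ⟨hZ0 ▸ hXonly, hZsing 0, hinj ?_⟩
  rw [hZ0, hXfix, ← hXdiv]
  simp only [pd_eq_pderiv, subst_mul hsub, subst_add hsub, Xv, subst_X hsub, hx,
    subst_pderiv_one h0 hx hφ, subst_pderiv_two h0 hx hφ, hZ, VF_eq_sum_pderiv]
  rw [poissonBracket_leibniz _ (pderiv_eq_zero_of_onlyX hXonly (by decide))
    (pderiv_eq_zero_of_onlyX hXonly (by decide)), hφ]
  simp

/-- **The push-forward of a transversally Hamiltonian vector field by a transversally
symplectic diffeomorphism is transversally Hamiltonian.** -/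
theorem pushforward_trans_hamiltonian
    (φ Xc Zc : Fin 3 → R3) (hd : IsDiffeo φ) (hs : TransSymp φ)
    (hXsing : ∀ i, Xc i ∈ mI) (hZsing : ∀ i, Zc i ∈ mI)
    (hXham : TransHam Xc) (hconj : Conj φ Xc Zc) :
    TransHam Zc :=
  pushforward_trans_hamiltonian_general φ Xc Zc hd hs hZsing hXham hconj

end
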